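/- arXiv:2401.04104 — 3 statements merged into one kernel-verified Lean document; each statement's English description precedes it below -/
import Mathlib

section
/- On the upper half-space ℂ^{n-1} × ℝ × [0,∞) (n ≥ 2), the function ρ_c((ξ,v,u),(ξ',v',u')) = | |ξ-ξ'|² + |u-u'| - i(v - v' + 2·Im⟨ξ,ξ'⟩) |^{1/2} (the modulus of a complex number, raised to the power 1/2) is a metric; its restriction to each horosphere {u = u₀} is independent of u₀ and coincides with the Korányi–Cygan metric on ℂ^{n-1} × ℝ; and for every (ξ₀,v₀) ∈ ℂ^{n-1} × ℝ the extended Carnot translation T_{(ξ₀,v₀)}(ξ,v,u) = (ξ₀+ξ, v₀+v+2·Im⟨ξ₀,ξ⟩, u) is an isometry of this metric. -/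
/-- The standard Hermitian product `⟨ξ,ξ'⟩ = ∑ i, ξ i * conj (ξ' i)` on `ℂ^d`. -/
noncomputable def herm {d : ℕ} (ξ ξ' : Fin d → ℂ) : ℂ :=
  ∑ i, ξ i * (starRingEnd ℂ) (ξ' i)

/-- The squared Hermitian norm `|ξ|² = ∑ i, |ξ i|²` on `ℂ^d`. -/
noncomputable def hnormSq {d : ℕ} (ξ : Fin d → ℂ) : ℝ :=
  ∑ i, Complex.normSq (ξ i)

/-- The Korányi–Cygan metric on the Heisenberg group `ℂ^d × ℝ`:
`ρ_c((ξ,v),(ξ',v')) = (|ξ-ξ'|⁴ + (v - v' + 2·Im⟨ξ,ξ'⟩)²)^{1/4}`. -/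
noncomputable def rhoC {d : ℕ} (p q : (Fin d → ℂ) × ℝ) : ℝ :=
  (hnormSq (p.1 - q.1) ^ 2 + (p.2 - q.2 + 2 * (herm p.1 q.1).im) ^ 2) ^ ((1 : ℝ) / 4)

/-- The extended Korányi–Cygan metric on the upper half-space `ℂ^d × ℝ × [0,∞)`
(points written `(ξ, (v, u))`):
`ρ_c((ξ,v,u),(ξ',v',u')) = | |ξ-ξ'|² + |u-u'| - i(v - v' + 2·Im⟨ξ,ξ'⟩) |^{1/2}`. -/
noncomputable def rhoU {d : ℕ} (p q : (Fin d → ℂ) × ℝ × ℝ) : ℝ :=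
  (‖(((hnormSq (p.1 - q.1) + |p.2.2 - q.2.2| : ℝ) : ℂ) -
      Complex.I * ((p.2.1 - q.2.1 + 2 * (herm p.1 q.1).im : ℝ) : ℂ))‖) ^ ((1 : ℝ) / 2)

/-- The extended Carnot translation of the upper half-space:
`T_{(ξ₀,v₀)}(ξ,v,u) = (ξ₀+ξ, v₀+v+2·Im⟨ξ₀,ξ⟩, u)`. -/
noncomputable def carnotT {d : ℕ} (ξ₀ : Fin d → ℂ) (v₀ : ℝ) (p : (Fin d → ℂ) × ℝ × ℝ) :
    (Fin d → ℂ) × ℝ × ℝ :=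
  (ξ₀ + p.1, (v₀ + p.2.1 + 2 * (herm ξ₀ p.1).im, p.2.2))

/-!
Write `ρ_c(p, q)² = ‖A(p, q)‖` with `A(p, q) = |ξ - ξ'|² + |u - u'| - i(v - v' + 2 Im⟨ξ, ξ'⟩)`.
Then `A(q, p) = conj A(p, q)`, Carnot translations preserve `A`, and
`A(p, r) = A(p, q) + A(q, r) - 2⟨ξ - ξ', ξ'' - ξ'⟩ - δ` with
`δ = |u - u'| + |u' - u''| - |u - u''|`. By the triangle inequality in `ℝ`, `0 ≤ δ/2` is at most
both `|u - u'|` and `|u' - u''|`; together with Cauchy–Schwarz and `Re A ≤ ‖A‖` this bounds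
`2|⟨ξ - ξ', ξ'' - ξ'⟩| + δ` by `2 √(‖A(p, q)‖ ‖A(q, r)‖)`, which is the triangle inequality
for `√‖A‖`.
-/

open Complex ComplexConjugate

lemma Real.sqrt_mul_sqrt_add_le {X Y s t m : ℝ} (hX : 0 ≤ X) (hY : 0 ≤ Y) (hm : 0 ≤ m)
    (hms : m ≤ s) (hmt : m ≤ t) : √X * √Y + m ≤ √(X + s) * √(Y + t) := by
  rw [← Real.sqrt_mul (show 0 ≤ X + s by linarith) (Y + t)]
  apply Real.le_sqrt_of_sq_le
  have hXY : 2 * (√X * √Y) ≤ X + Y := by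
    nlinarith [sq_nonneg (√X - √Y), Real.sq_sqrt hX, Real.sq_sqrt hY]
  nlinarith [Real.mul_self_sqrt hX, Real.mul_self_sqrt hY, Real.sqrt_nonneg X,
    Real.sqrt_nonneg Y, mul_le_mul hms hmt hm (hm.trans hms)]

section Hermitian

variable {d : ℕ}

lemma conj_herm (x y : Fin d → ℂ) : conj (herm x y) = herm y x := by
  simp [herm, map_sum, mul_comm]

lemma herm_add_left (x y z : Fin d → ℂ) : herm (x + y) z = herm x z + herm y z := by
  simp [herm, add_mul, Finset.sum_add_distrib]

lemma herm_add_right (x y z : Fin d → ℂ) : herm x (y + z) = herm x y + herm x z := by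
  simp [herm, mul_add, Finset.sum_add_distrib]

lemma herm_sub_left (x y z : Fin d → ℂ) : herm (x - y) z = herm x z - herm y z := by
  simp [herm, sub_mul, Finset.sum_sub_distrib]

lemma herm_sub_right (x y z : Fin d → ℂ) : herm x (y - z) = herm x y - herm x z := by
  simp [herm, mul_sub, Finset.sum_sub_distrib]

lemma herm_self (x : Fin d → ℂ) : herm x x = hnormSq x := by
  simp [herm, hnormSq, mul_conj]

lemma two_mul_im_herm_mul_I (x y : Fin d → ℂ) :
    2 * ((herm x y).im : ℂ) * I = herm x y - herm y x := by
  rw [← conj_herm x y, sub_conj]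
  push_cast
  ring

lemma hnormSq_nonneg (x : Fin d → ℂ) : 0 ≤ hnormSq x :=
  Finset.sum_nonneg fun _ _ => normSq_nonneg _

lemma hnormSq_eq_zero_iff {x : Fin d → ℂ} : hnormSq x = 0 ↔ x = 0 := by
  simp [hnormSq, Finset.sum_eq_zero_iff_of_nonneg fun i _ => normSq_nonneg (x i), funext_iff]

lemma hnormSq_sub_comm (x y : Fin d → ℂ) : hnormSq (x - y) = hnormSq (y - x) := by
  simp only [hnormSq, Pi.sub_apply, ← normSq_neg (y _ - x _), neg_sub]

lemma ofReal_hnormSq_sub (x y : Fin d → ℂ) :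
    (hnormSq (x - y) : ℂ) = herm x x + herm y y - herm x y - herm y x := by
  rw [← herm_self, herm_sub_left, herm_sub_right, herm_sub_right]
  ring

lemma norm_herm_le (x y : Fin d → ℂ) : ‖herm x y‖ ≤ √(hnormSq x) * √(hnormSq y) := by
  calc ‖herm x y‖ ≤ ∑ i, ‖x i‖ * ‖y i‖ :=
        (norm_sum_le _ _).trans_eq (by simp)
    _ ≤ √(∑ i, ‖x i‖ ^ 2) * √(∑ i, ‖y i‖ ^ 2) := Real.sum_mul_le_sqrt_mul_sqrt _ _ _
    _ = √(hnormSq x) * √(hnormSq y) := by simp only [Complex.sq_norm, hnormSq]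

end Hermitian

section CyganGauge

variable {d : ℕ}

noncomputable def cyganGauge (p q : (Fin d → ℂ) × ℝ × ℝ) : ℂ :=
  ((hnormSq (p.1 - q.1) + |p.2.2 - q.2.2| : ℝ) : ℂ) -
    I * ((p.2.1 - q.2.1 + 2 * (herm p.1 q.1).im : ℝ) : ℂ)

lemma rhoU_eq_sqrt_norm_cyganGauge (p q : (Fin d → ℂ) × ℝ × ℝ) :
    rhoU p q = √‖cyganGauge p q‖ := by
  rw [rhoU, cyganGauge, Real.sqrt_eq_rpow]

lemma cyganGauge_re (p q : (Fin d → ℂ) × ℝ × ℝ) :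
    (cyganGauge p q).re = hnormSq (p.1 - q.1) + |p.2.2 - q.2.2| := by
  simp [cyganGauge]

lemma cyganGauge_im (p q : (Fin d → ℂ) × ℝ × ℝ) :
    (cyganGauge p q).im = -(p.2.1 - q.2.1 + 2 * (herm p.1 q.1).im) := by
  simp [cyganGauge]

lemma cyganGauge_eq (p q : (Fin d → ℂ) × ℝ × ℝ) :
    cyganGauge p q = herm p.1 p.1 + herm q.1 q.1 - 2 * herm p.1 q.1
      + ((|p.2.2 - q.2.2| : ℝ) : ℂ) - I * ((p.2.1 - q.2.1 : ℝ) : ℂ) := by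
  rw [cyganGauge]
  push_cast
  linear_combination ofReal_hnormSq_sub p.1 q.1 - two_mul_im_herm_mul_I p.1 q.1

lemma cyganGauge_eq_zero_iff {p q : (Fin d → ℂ) × ℝ × ℝ} : cyganGauge p q = 0 ↔ p = q := by
  refine ⟨fun h => ?_, ?_⟩
  · have hre := cyganGauge_re p q
    have him := cyganGauge_im p q
    rw [h, zero_re] at hre
    rw [h, zero_im] at him
    have hξ : p.1 = q.1 := by
      rw [← sub_eq_zero, ← hnormSq_eq_zero_iff]
      linarith [hnormSq_nonneg (p.1 - q.1), abs_nonneg (p.2.2 - q.2.2)]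
    have hu : |p.2.2 - q.2.2| = 0 := by
      linarith [hnormSq_nonneg (p.1 - q.1), abs_nonneg (p.2.2 - q.2.2)]
    rw [hξ, herm_self, ofReal_im] at him
    exact Prod.ext hξ (Prod.ext (by linarith) (by linarith [abs_eq_zero.1 hu]))
  · rintro rfl
    rw [cyganGauge_eq, sub_self, sub_self, abs_zero]
    push_cast
    ring

lemma cyganGauge_comm (p q : (Fin d → ℂ) × ℝ × ℝ) :
    cyganGauge q p = conj (cyganGauge p q) := by
  rw [cyganGauge_eq, cyganGauge_eq, abs_sub_comm q.2.2]
  simp only [map_add, map_sub, map_mul, conj_ofReal, conj_I, conj_herm, map_ofNat]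
  push_cast
  ring

lemma cyganGauge_carnotT (ξ₀ : Fin d → ℂ) (v₀ : ℝ) (p q : (Fin d → ℂ) × ℝ × ℝ) :
    cyganGauge (carnotT ξ₀ v₀ p) (carnotT ξ₀ v₀ q) = cyganGauge p q := by
  rw [cyganGauge_eq, cyganGauge_eq]
  simp only [carnotT, herm_add_left, herm_add_right]
  push_cast
  linear_combination two_mul_im_herm_mul_I ξ₀ q.1 - two_mul_im_herm_mul_I ξ₀ p.1

lemma cyganGauge_eq_add_sub (p q r : (Fin d → ℂ) × ℝ × ℝ) :
    cyganGauge p r = cyganGauge p q + cyganGauge q r - 2 * herm (p.1 - q.1) (r.1 - q.1) -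
      ((|p.2.2 - q.2.2| + |q.2.2 - r.2.2| - |p.2.2 - r.2.2| : ℝ) : ℂ) := by
  rw [cyganGauge_eq, cyganGauge_eq, cyganGauge_eq, herm_sub_left, herm_sub_right,
    herm_sub_right]
  push_cast
  ring

lemma norm_cyganGauge_le (p q r : (Fin d → ℂ) × ℝ × ℝ) :
    ‖cyganGauge p r‖ ≤ (√‖cyganGauge p q‖ + √‖cyganGauge q r‖) ^ 2 := by
  set δ := |p.2.2 - q.2.2| + |q.2.2 - r.2.2| - |p.2.2 - r.2.2|
  have hδ : 0 ≤ δ / 2 ∧ δ / 2 ≤ |p.2.2 - q.2.2| ∧ δ / 2 ≤ |q.2.2 - r.2.2| := by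
    refine ⟨?_, ?_, ?_⟩ <;>
    linarith [abs_sub_le p.2.2 q.2.2 r.2.2, abs_sub_le q.2.2 p.2.2 r.2.2,
      abs_sub_le p.2.2 r.2.2 q.2.2, abs_sub_comm p.2.2 q.2.2, abs_sub_comm q.2.2 r.2.2]
  have hcross : ‖herm (p.1 - q.1) (r.1 - q.1)‖ + δ / 2
      ≤ √‖cyganGauge p q‖ * √‖cyganGauge q r‖ :=
    calc ‖herm (p.1 - q.1) (r.1 - q.1)‖ + δ / 2
        ≤ √(hnormSq (p.1 - q.1)) * √(hnormSq (q.1 - r.1)) + δ / 2 := by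
          grw [norm_herm_le, hnormSq_sub_comm r.1]
      _ ≤ √(hnormSq (p.1 - q.1) + |p.2.2 - q.2.2|) *
            √(hnormSq (q.1 - r.1) + |q.2.2 - r.2.2|) :=
          Real.sqrt_mul_sqrt_add_le (hnormSq_nonneg _) (hnormSq_nonneg _) hδ.1 hδ.2.1 hδ.2.2
      _ ≤ √‖cyganGauge p q‖ * √‖cyganGauge q r‖ := by
          rw [← cyganGauge_re, ← cyganGauge_re]
          gcongr <;> exact re_le_norm _
  have hsplit : ‖cyganGauge p r‖ ≤ ‖cyganGauge p q‖ + ‖cyganGauge q r‖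
      + 2 * ‖herm (p.1 - q.1) (r.1 - q.1)‖ + δ := by
    rw [cyganGauge_eq_add_sub p q r]
    grw [norm_sub_le, norm_sub_le, norm_add_le, norm_mul, Complex.norm_two, norm_real,
      Real.norm_of_nonneg (by linarith [hδ.1])]
  rw [add_sq, Real.sq_sqrt (norm_nonneg _), Real.sq_sqrt (norm_nonneg _)]
  linarith

end CyganGauge

section Metric

variable {d : ℕ}

lemma rhoU_eq_zero_iff {p q : (Fin d → ℂ) × ℝ × ℝ} : rhoU p q = 0 ↔ p = q := by
  rw [rhoU_eq_sqrt_norm_cyganGauge, Real.sqrt_eq_zero (norm_nonneg _), norm_eq_zero,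
    cyganGauge_eq_zero_iff]

lemma rhoU_comm (p q : (Fin d → ℂ) × ℝ × ℝ) : rhoU p q = rhoU q p := by
  rw [rhoU_eq_sqrt_norm_cyganGauge, rhoU_eq_sqrt_norm_cyganGauge, cyganGauge_comm, norm_conj]

lemma rhoU_triangle (p q r : (Fin d → ℂ) × ℝ × ℝ) : rhoU p r ≤ rhoU p q + rhoU q r := by
  simp only [rhoU_eq_sqrt_norm_cyganGauge]
  exact Real.sqrt_le_left (by positivity) |>.2 (norm_cyganGauge_le p q r)

lemma rhoU_carnotT (ξ₀ : Fin d → ℂ) (v₀ : ℝ) (p q : (Fin d → ℂ) × ℝ × ℝ) :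
    rhoU (carnotT ξ₀ v₀ p) (carnotT ξ₀ v₀ q) = rhoU p q := by
  rw [rhoU_eq_sqrt_norm_cyganGauge, rhoU_eq_sqrt_norm_cyganGauge, cyganGauge_carnotT]

lemma rhoU_horosphere (ξ ξ' : Fin d → ℂ) (v v' u₀ : ℝ) :
    rhoU (ξ, (v, u₀)) (ξ', (v', u₀)) = rhoC (ξ, v) (ξ', v') := by
  have hI : ∀ x y : ℝ, (x : ℂ) - I * y = x + (-y : ℝ) * I := fun x y => by push_cast; ring
  rw [rhoU, rhoC, sub_self, abs_zero, add_zero, hI, norm_add_mul_I, neg_sq,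
    Real.sqrt_eq_rpow, ← Real.rpow_mul (by positivity)]
  norm_num

end Metric

theorem upper_half_space_cygan_metric_general (n : ℕ) :
    (∀ p q : (Fin (n - 1) → ℂ) × ℝ × ℝ, 0 ≤ p.2.2 → 0 ≤ q.2.2 → (rhoU p q = 0 ↔ p = q)) ∧
    (∀ p q : (Fin (n - 1) → ℂ) × ℝ × ℝ, 0 ≤ p.2.2 → 0 ≤ q.2.2 → rhoU p q = rhoU q p) ∧
    (∀ p q r : (Fin (n - 1) → ℂ) × ℝ × ℝ, 0 ≤ p.2.2 → 0 ≤ q.2.2 → 0 ≤ r.2.2 →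
      rhoU p r ≤ rhoU p q + rhoU q r) ∧
    (∀ (ξ ξ' : Fin (n - 1) → ℂ) (v v' u₀ : ℝ), 0 ≤ u₀ →
      rhoU (ξ, (v, u₀)) (ξ', (v', u₀)) = rhoC (ξ, v) (ξ', v')) ∧
    (∀ (ξ₀ : Fin (n - 1) → ℂ) (v₀ : ℝ) (p q : (Fin (n - 1) → ℂ) × ℝ × ℝ),
      0 ≤ p.2.2 → 0 ≤ q.2.2 →
      rhoU (carnotT ξ₀ v₀ p) (carnotT ξ₀ v₀ q) = rhoU p q) :=
  ⟨fun _ _ _ _ => rhoU_eq_zero_iff, fun p q _ _ => rhoU_comm p q,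
    fun p q r _ _ _ => rhoU_triangle p q r, fun ξ ξ' v v' u₀ _ => rhoU_horosphere ξ ξ' v v' u₀,
    fun ξ₀ v₀ p q _ _ => rhoU_carnotT ξ₀ v₀ p q⟩

/-- On the upper half-space `ℂ^{n-1} × ℝ × [0,∞)` (`n ≥ 2`), the function `ρ_c` above is a
metric; its restriction to each horosphere `{u = u₀}` is independent of `u₀` and coincides
with the Korányi–Cygan metric on `ℂ^{n-1} × ℝ`; and every extended Carnot translation is an
isometry of this metric. -/
theorem upper_half_space_cygan_metric (n : ℕ) (hn : 2 ≤ n) :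
    (∀ p q : (Fin (n - 1) → ℂ) × ℝ × ℝ, 0 ≤ p.2.2 → 0 ≤ q.2.2 → (rhoU p q = 0 ↔ p = q)) ∧
    (∀ p q : (Fin (n - 1) → ℂ) × ℝ × ℝ, 0 ≤ p.2.2 → 0 ≤ q.2.2 → rhoU p q = rhoU q p) ∧
    (∀ p q r : (Fin (n - 1) → ℂ) × ℝ × ℝ, 0 ≤ p.2.2 → 0 ≤ q.2.2 → 0 ≤ r.2.2 →
      rhoU p r ≤ rhoU p q + rhoU q r) ∧
    (∀ (ξ ξ' : Fin (n - 1) → ℂ) (v v' u₀ : ℝ), 0 ≤ u₀ →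
      rhoU (ξ, (v, u₀)) (ξ', (v', u₀)) = rhoC (ξ, v) (ξ', v')) ∧
    (∀ (ξ₀ : Fin (n - 1) → ℂ) (v₀ : ℝ) (p q : (Fin (n - 1) → ℂ) × ℝ × ℝ),
      0 ≤ p.2.2 → 0 ≤ q.2.2 →
      rhoU (carnotT ξ₀ v₀ p) (carnotT ξ₀ v₀ q) = rhoU p q) :=
  upper_half_space_cygan_metric_general n
end

section
/- For every integer m ≥ 2 and every real number c with 0 ≤ c < 1, there exists a compact, connected, nowhere dense subset K of the unit cube [0,1]^m ⊂ ℝ^m whose m-dimensional Lebesgue measure equals c. -/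
open MeasureTheory Set Function
open scoped ENNReal

/-! A compact `A ⊆ [0, 1]` with dense complement and measure `c` is obtained by removing from
`[0, 1]` a dense open set of measure `< 1 - c` and then cutting the rest down along a half-line
`(-∞, t]`, where `t` comes from the intermediate value theorem (the measure of the cut is
1-Lipschitz in `t`). In the cube, the comb `{x₀ ∈ A} ∪ {x₁ = 0}` is connected because each tooth
`{x₀ = a}` is convex and meets the convex face `{x₁ = 0}`; it has measure `vol A = c` since the
face is null, and it is nowhere dense because its complement contains the dense open set
`{x₀ ∉ A, x₁ ≠ 0}`. -/

lemma lipschitzWith_toReal_volume_inter_Iic {s : Set ℝ} (hs : volume s ≠ ∞) :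
    LipschitzWith 1 fun t ↦ (volume (s ∩ Iic t)).toReal := by
  refine LipschitzWith.of_le_add fun x y ↦ ?_
  have hcover : s ∩ Iic x ⊆ (s ∩ Iic y) ∪ uIcc y x := by
    rintro z ⟨hzs, hzx⟩
    rcases le_or_gt z y with hzy | hyz
    · exact Or.inl ⟨hzs, hzy⟩
    · exact Or.inr (Icc_subset_uIcc ⟨hyz.le, hzx⟩)
  calc (volume (s ∩ Iic x)).toReal
      ≤ (volume (s ∩ Iic y)).toReal + (volume (uIcc y x)).toReal :=
        ENNReal.toReal_le_add ((measure_mono hcover).trans (measure_union_le _ _))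
          (measure_ne_top_of_subset inter_subset_left hs) (by simp [Real.volume_interval])
    _ = (volume (s ∩ Iic y)).toReal + dist x y := by
        rw [Real.volume_interval, ENNReal.toReal_ofReal (abs_nonneg _), Real.dist_eq]

lemma exists_volume_inter_Iic_eq {s : Set ℝ} {a b : ℝ} (hs : s ⊆ Icc a b) {c : ℝ}
    (hc0 : 0 ≤ c) (hc : ENNReal.ofReal c ≤ volume s) :
    ∃ t, volume (s ∩ Iic t) = ENNReal.ofReal c := by
  have hs_fin : volume s ≠ ∞ := measure_ne_top_of_subset hs (by simp [Real.volume_Icc])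
  have hbelow : s ∩ Iic (a - 1) = ∅ :=
    eq_empty_of_forall_notMem fun z hz ↦ by linarith [(hs hz.1).1, show z ≤ a - 1 from hz.2]
  have habove : s ∩ Iic b = s := inter_eq_left.2 fun z hz ↦ (hs hz).2
  obtain ⟨t, ht⟩ := intermediate_value_univ (a - 1) b
    (lipschitzWith_toReal_volume_inter_Iic hs_fin).continuous
    (show c ∈ Icc _ _ by
      rw [hbelow, habove, measure_empty, ENNReal.toReal_zero]
      exact ⟨hc0, (ENNReal.ofReal_le_iff_le_toReal hs_fin).1 hc⟩)
  refine ⟨t, ?_⟩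
  rw [← ENNReal.ofReal_toReal (measure_ne_top_of_subset inter_subset_left hs_fin)]
  exact congrArg ENNReal.ofReal ht

lemma exists_isCompact_dense_compl_volume_eq {c : ℝ} (hc0 : 0 ≤ c) (hc1 : c < 1) :
    ∃ A ⊆ Icc (0 : ℝ) 1, IsCompact A ∧ Dense Aᶜ ∧ volume A = ENNReal.ofReal c := by
  have hQ_null : volume (range ((↑) : ℚ → ℝ)) = 0 := (countable_range _).measure_zero _
  obtain ⟨U, hQU, hU, hU_vol⟩ := exists_isOpen_lt_of_lt (μ := volume) (range ((↑) : ℚ → ℝ))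
    (ENNReal.ofReal (1 - c)) (by simpa [hQ_null] using hc1)
  have hc_le : ENNReal.ofReal c ≤ volume (Icc (0 : ℝ) 1 \ U) := by
    refine le_trans ?_ le_measure_sdiff
    rw [Real.volume_Icc, sub_zero, ENNReal.ofReal_one]
    refine ENNReal.le_sub_of_add_le_left hU_vol.ne_top ?_
    calc volume U + ENNReal.ofReal c ≤ ENNReal.ofReal (1 - c) + ENNReal.ofReal c := by
          gcongr
      _ = 1 := by rw [← ENNReal.ofReal_add (by linarith) hc0]; simp
  obtain ⟨t, ht⟩ := exists_volume_inter_Iic_eq sdiff_subset hc0 hc_le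
  refine ⟨(Icc 0 1 \ U) ∩ Iic t, inter_subset_left.trans sdiff_subset,
    (isCompact_Icc.diff hU).inter_right isClosed_Iic, ?_, ht⟩
  exact (Rat.denseRange_cast.mono hQU).mono fun x hxU hxA ↦ hxA.1.2 hxU

section UnitCube

variable {ι : Type*} [DecidableEq ι] {i : ι} {s : Set ℝ}

def unitCubeUpdate (i : ι) (s : Set ℝ) : Set (ι → ℝ) :=
  univ.pi (update (fun _ ↦ Icc 0 1) i s)

lemma mem_unitCubeUpdate {x : ι → ℝ} :
    x ∈ unitCubeUpdate i s ↔ x i ∈ s ∧ ∀ k ≠ i, x k ∈ Icc 0 1 := by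
  simpa only [unitCubeUpdate, mem_univ_pi] using forall_update_iff _ fun k t ↦ x k ∈ t

lemma unitCubeUpdate_mono {t : Set ℝ} (hst : s ⊆ t) : unitCubeUpdate i s ⊆ unitCubeUpdate i t :=
  fun _ hx ↦ mem_unitCubeUpdate.2 ⟨hst (mem_unitCubeUpdate.1 hx).1, (mem_unitCubeUpdate.1 hx).2⟩

lemma unitCubeUpdate_subset_Icc (hs : s ⊆ Icc 0 1) : unitCubeUpdate i s ⊆ Icc 0 1 := by
  intro x hx
  have hx01 : ∀ k, x k ∈ Icc (0 : ℝ) 1 := fun k ↦ by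
    rcases eq_or_ne k i with rfl | hk
    exacts [hs (mem_unitCubeUpdate.1 hx).1, (mem_unitCubeUpdate.1 hx).2 k hk]
  exact ⟨fun k ↦ (hx01 k).1, fun k ↦ (hx01 k).2⟩

lemma isCompact_unitCubeUpdate (hs : IsCompact s) : IsCompact (unitCubeUpdate i s) :=
  isCompact_univ_pi ((forall_update_iff _ fun _ ↦ IsCompact).2 ⟨hs, fun _ _ ↦ isCompact_Icc⟩)

lemma isClosed_unitCubeUpdate (hs : IsClosed s) : IsClosed (unitCubeUpdate i s) :=
  isClosed_set_pi fun _ _ ↦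
    (forall_update_iff _ fun _ ↦ IsClosed).2 ⟨hs, fun _ _ ↦ isClosed_Icc⟩ _

lemma convex_unitCubeUpdate (hs : Convex ℝ s) : Convex ℝ (unitCubeUpdate i s) :=
  convex_pi fun _ _ ↦ (forall_update_iff _ fun _ ↦ Convex ℝ).2 ⟨hs, fun _ _ ↦ convex_Icc 0 1⟩ _

lemma volume_unitCubeUpdate [Fintype ι] : volume (unitCubeUpdate i s) = volume s := by
  rw [unitCubeUpdate, volume_pi_pi, Finset.prod_congr rfl fun k _ ↦ apply_update
    (fun _ ↦ volume) (fun _ ↦ Icc (0 : ℝ) 1) i s k, Finset.prod_update_of_mem (Finset.mem_univ i)]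
  simp [Real.volume_Icc]

end UnitCube

section Comb

variable {ι : Type*} [DecidableEq ι] {A : Set ℝ} {i j : ι}

def comb (A : Set ℝ) (i j : ι) : Set (ι → ℝ) :=
  unitCubeUpdate i A ∪ unitCubeUpdate j {0}

lemma comb_subset_Icc (hA : A ⊆ Icc 0 1) : comb A i j ⊆ Icc 0 1 :=
  union_subset (unitCubeUpdate_subset_Icc hA) (unitCubeUpdate_subset_Icc (by simp))

lemma isCompact_comb (hA : IsCompact A) : IsCompact (comb A i j) :=
  (isCompact_unitCubeUpdate hA).union (isCompact_unitCubeUpdate isCompact_singleton)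

lemma isConnected_comb (hA : A ⊆ Icc 0 1) (hij : i ≠ j) : IsConnected (comb A i j) := by
  have hface : IsPreconnected (unitCubeUpdate j {(0 : ℝ)}) :=
    (convex_unitCubeUpdate (convex_singleton 0)).isPreconnected
  have h0 : (0 : ι → ℝ) ∈ unitCubeUpdate j {0} := mem_unitCubeUpdate.2 ⟨rfl, fun _ _ ↦ by simp⟩
  refine ⟨⟨0, Or.inr h0⟩, isPreconnected_of_forall 0 fun y hy ↦ ?_⟩
  rcases hy with hy | hy
  · have hy01 : ∀ k, y k ∈ Icc (0 : ℝ) 1 := fun k ↦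
      ⟨(unitCubeUpdate_subset_Icc hA hy).1 k, (unitCubeUpdate_subset_Icc hA hy).2 k⟩
    have hyj : ∀ k, update y j 0 k ∈ Icc (0 : ℝ) 1 := fun k ↦ by
      rcases eq_or_ne k j with rfl | hk
      exacts [by simp, by simpa [update_of_ne hk] using hy01 k]
    have hfibre : IsPreconnected (unitCubeUpdate i {y i}) :=
      (convex_unitCubeUpdate (convex_singleton _)).isPreconnected
    have hfibre_sub : unitCubeUpdate i {y i} ⊆ comb A i j :=
      (unitCubeUpdate_mono (singleton_subset_iff.2 (mem_unitCubeUpdate.1 hy).1)).trans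
        subset_union_left
    have hmeet_face : update y j 0 ∈ unitCubeUpdate j {0} :=
      mem_unitCubeUpdate.2 ⟨by simp, fun k _ ↦ hyj k⟩
    have hmeet_fibre : update y j 0 ∈ unitCubeUpdate i {y i} :=
      mem_unitCubeUpdate.2 ⟨by simp [update_of_ne hij], fun k _ ↦ hyj k⟩
    exact ⟨_, union_subset subset_union_right hfibre_sub, Or.inl h0,
      Or.inr (mem_unitCubeUpdate.2 ⟨rfl, fun k _ ↦ hy01 k⟩),
      hface.union _ hmeet_face hmeet_fibre hfibre⟩
  · exact ⟨_, subset_union_right, h0, hy, hface⟩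

lemma isNowhereDense_comb (hA : IsClosed A) (hA_dense : Dense Aᶜ) :
    IsNowhereDense (comb A i j) := by
  have hclosed : IsClosed (comb A i j) :=
    (isClosed_unitCubeUpdate hA).union (isClosed_unitCubeUpdate isClosed_singleton)
  rw [hclosed.isNowhereDense_iff, interior_eq_empty_iff_dense_compl]
  refine Dense.mono ?_ ((hA_dense.preimage (isOpenMap_eval i)).inter_of_isOpen_right
      ((dense_compl_singleton (0 : ℝ)).preimage (isOpenMap_eval j))
      (isOpen_compl_singleton.preimage (continuous_apply j)))
  rintro x ⟨hxA, hx0⟩ (hx | hx)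
  exacts [hxA (mem_unitCubeUpdate.1 hx).1, hx0 (mem_unitCubeUpdate.1 hx).1]

lemma volume_comb [Fintype ι] : volume (comb A i j) = volume A := by
  have hface : volume (unitCubeUpdate j {(0 : ℝ)}) = 0 := by
    rw [volume_unitCubeUpdate, Real.volume_singleton]
  rw [comb, measure_congr (union_ae_eq_left_of_ae_eq_empty (ae_eq_empty.2 hface)),
    volume_unitCubeUpdate]

end Comb

/-- For every integer `m ≥ 2` and every real `c` with `0 ≤ c < 1`, there exists a compact,
connected, nowhere dense subset `K` of the unit cube `[0,1]^m ⊂ ℝ^m` whose `m`-dimensional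
Lebesgue measure equals `c` (a "fat" Sierpiński carpet). -/
theorem fat_sierpinski_carpet_exists (m : ℕ) (hm : 2 ≤ m) (c : ℝ) (hc0 : 0 ≤ c)
    (hc1 : c < 1) :
    ∃ K : Set (Fin m → ℝ),
      K ⊆ Set.Icc (0 : Fin m → ℝ) 1 ∧
      IsCompact K ∧
      IsConnected K ∧
      IsNowhereDense K ∧
      volume K = ENNReal.ofReal c := by
  obtain ⟨A, hA01, hA_cpt, hA_dense, hA_vol⟩ := exists_isCompact_dense_compl_volume_eq hc0 hc1
  have h01 : (⟨0, by omega⟩ : Fin m) ≠ ⟨1, hm⟩ := by simp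
  refine ⟨comb A ⟨0, by omega⟩ ⟨1, hm⟩, comb_subset_Icc hA01, isCompact_comb hA_cpt,
    isConnected_comb hA01 h01, isNowhereDense_comb hA_cpt.isClosed hA_dense, ?_⟩
  rw [volume_comb, hA_vol]
end

section
/- For every integer m ≥ 1 and every real number c with 0 ≤ c < 1, there exists a sequence of odd integers k_j ≥ 3 (j = 1,2,…) such that the infinite product ∏_{j=1}^∞ (1 - k_j^{-m}) converges to c. -/
/-!
Greedy construction: starting from the empty product `1`, multiply at each step by the factor
`1 - k⁻ᵐ` for an odd `k ≥ 3` just large enough that the partial product stays above `c`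
(`k > P / (P - c)` suffices). The partial products then decrease and stay above `c`. While they
stay at distance `≥ ε` from `c`, the chosen `k` is bounded in terms of `ε`, so every factor is at
most some fixed `r < 1`, and the products would decay like `rⁿ` — impossible above `c + ε`.
-/

open Filter Topology

section GreedyProduct

noncomputable def greedyProduct (g : ℝ → ℝ) : ℕ → ℝ
  | 0 => 1
  | n + 1 => greedyProduct g n * g (greedyProduct g n)

variable {c : ℝ} {g : ℝ → ℝ}

theorem prod_range_greedyProduct (g : ℝ → ℝ) (N : ℕ) :
    ∏ j ∈ Finset.range N, g (greedyProduct g j) = greedyProduct g N := by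
  induction N with
  | zero => rfl
  | succ N ih => rw [Finset.prod_range_succ, ih, greedyProduct]

theorem lt_greedyProduct (hc1 : c < 1) (hg : ∀ P, c < P → c < P * g P) (n : ℕ) :
    c < greedyProduct g n := by
  induction n with
  | zero => exact hc1
  | succ n ih => exact hg _ ih

theorem greedyProduct_antitone (hc0 : 0 ≤ c) (hc1 : c < 1) (hg : ∀ P, c < P → c < P * g P)
    (hg1 : ∀ P, c < P → g P ≤ 1) : Antitone (greedyProduct g) := by
  refine antitone_nat_of_succ_le fun n => ?_
  have hP := lt_greedyProduct hc1 hg n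
  exact mul_le_of_le_one_right (hc0.trans hP.le) (hg1 _ hP)

theorem greedyProduct_le_pow {a r : ℝ} (ha : 0 ≤ a) (hr : 0 ≤ r) (hgr : ∀ P, a ≤ P → g P ≤ r)
    (hPa : ∀ n, a ≤ greedyProduct g n) (n : ℕ) : greedyProduct g n ≤ r ^ n := by
  induction n with
  | zero => rfl
  | succ n ih =>
    have hP0 : 0 ≤ greedyProduct g n := ha.trans (hPa n)
    calc greedyProduct g (n + 1) = greedyProduct g n * g (greedyProduct g n) := rfl
      _ ≤ greedyProduct g n * r := mul_le_mul_of_nonneg_left (hgr _ (hPa n)) hP0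
      _ ≤ r ^ n * r := mul_le_mul_of_nonneg_right ih hr
      _ = r ^ (n + 1) := (pow_succ r n).symm

theorem tendsto_greedyProduct (hc0 : 0 ≤ c) (hc1 : c < 1) (hg : ∀ P, c < P → c < P * g P)
    (hg1 : ∀ P, c < P → g P ≤ 1) (hdecay : ∀ ε > 0, ∃ r < 1, 0 ≤ r ∧ ∀ P, c + ε ≤ P → g P ≤ r) :
    Tendsto (greedyProduct g) atTop (𝓝 c) := by
  have hanti := greedyProduct_antitone hc0 hc1 hg hg1
  have hbdd : BddBelow (Set.range (greedyProduct g)) :=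
    ⟨c, Set.forall_mem_range.2 fun n => (lt_greedyProduct hc1 hg n).le⟩
  set L := ⨅ n, greedyProduct g n
  have hL : c ≤ L := le_ciInf fun n => (lt_greedyProduct hc1 hg n).le
  suffices L = c from this ▸ tendsto_atTop_ciInf hanti hbdd
  by_contra hLc
  have hcL : c < L := hL.lt_of_ne' hLc
  obtain ⟨r, hr1, hr0, hgr⟩ := hdecay (L - c) (sub_pos.2 hcL)
  have hLP : ∀ n, c + (L - c) ≤ greedyProduct g n := fun n => by
    simpa using ciInf_le hbdd n
  obtain ⟨n, hn⟩ : ∃ n, r ^ n < L := ((tendsto_pow_atTop_nhds_zero_of_lt_one hr0 hr1).eventually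
    (gt_mem_nhds (hc0.trans_lt hcL))).exists
  have hPr := greedyProduct_le_pow (by linarith) hr0 hgr hLP n
  linarith [hLP n]

end GreedyProduct

noncomputable def oddAbove (x : ℝ) : ℕ := 2 * ⌊x⌋₊ + 3

theorem odd_oddAbove (x : ℝ) : Odd (oddAbove x) := ⟨⌊x⌋₊ + 1, by unfold oddAbove; ring⟩

theorem three_le_oddAbove (x : ℝ) : 3 ≤ oddAbove x := Nat.le_add_left 3 _

theorem lt_oddAbove (x : ℝ) : x < oddAbove x := by
  have := Nat.lt_floor_add_one x
  have : (0 : ℝ) ≤ ⌊x⌋₊ := Nat.cast_nonneg _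
  unfold oddAbove
  push_cast
  linarith

theorem oddAbove_mono : Monotone oddAbove := fun _ _ hxy => by
  unfold oddAbove
  gcongr

theorem lt_mul_one_sub_inv_pow {m : ℕ} (hm : 1 ≤ m) {c P x : ℝ} (hP : 0 ≤ P) (hcP : c < P)
    (hx1 : 1 ≤ x) (hx : P / (P - c) < x) : c < P * (1 - (x ^ m)⁻¹) := by
  have hx0 : 0 < x := one_pos.trans_le hx1
  have hdiv : P / x < P - c := by
    rw [div_lt_iff₀ hx0]
    rwa [div_lt_iff₀ (sub_pos.2 hcP), mul_comm] at hx
  have hpow : P * (x ^ m)⁻¹ ≤ P / x := by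
    rw [div_eq_mul_inv]
    gcongr
    exact le_self_pow₀ hx1 (by omega)
  linarith [mul_sub P 1 (x ^ m)⁻¹]

theorem div_sub_le_of_add_le {c ε P : ℝ} (hc0 : 0 ≤ c) (hε : 0 < ε) (hP : c + ε ≤ P) :
    P / (P - c) ≤ (c + ε) / ε := by
  rw [div_le_div_iff₀ (by linarith) hε]
  nlinarith

noncomputable def sierpinskiStep (c P : ℝ) : ℕ := oddAbove (P / (P - c))

noncomputable def sierpinskiFactor (m : ℕ) (c P : ℝ) : ℝ := 1 - ((sierpinskiStep c P : ℝ) ^ m)⁻¹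

theorem one_le_sierpinskiStep (c P : ℝ) : (1 : ℝ) ≤ sierpinskiStep c P := by
  exact_mod_cast (three_le_oddAbove _).trans' (by norm_num)

section SierpinskiFactor

variable {m : ℕ} {c P : ℝ}

theorem lt_mul_sierpinskiFactor (hm : 1 ≤ m) (hc0 : 0 ≤ c) (hcP : c < P) :
    c < P * sierpinskiFactor m c P :=
  lt_mul_one_sub_inv_pow hm (hc0.trans hcP.le) hcP (one_le_sierpinskiStep c P) (lt_oddAbove _)

theorem sierpinskiFactor_le_one : sierpinskiFactor m c P ≤ 1 :=
  sub_le_self _ (by positivity)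

theorem sierpinskiFactor_nonneg : 0 ≤ sierpinskiFactor m c P :=
  sub_nonneg.2 (inv_le_one_of_one_le₀ (one_le_pow₀ (one_le_sierpinskiStep c P)))

theorem sierpinskiFactor_lt_one : sierpinskiFactor m c P < 1 :=
  sub_lt_self _ (inv_pos.2 (pow_pos (one_pos.trans_le (one_le_sierpinskiStep c P)) m))

theorem sierpinskiFactor_le_of_add_le {ε : ℝ} (hc0 : 0 ≤ c) (hε : 0 < ε) (hP : c + ε ≤ P) :
    sierpinskiFactor m c P ≤ sierpinskiFactor m c (c + ε) := by
  have hstep : sierpinskiStep c P ≤ sierpinskiStep c (c + ε) := by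
    refine oddAbove_mono ?_
    simpa using div_sub_le_of_add_le hc0 hε hP
  have := one_le_sierpinskiStep c P
  unfold sierpinskiFactor
  gcongr

end SierpinskiFactor

/-- For every integer `m ≥ 1` and every real `c` with `0 ≤ c < 1`, there exists a sequence of
odd integers `k_j ≥ 3` such that the infinite product `∏_{j} (1 - k_j^{-m})` converges
to `c`. -/
theorem sierpinski_measure_product (m : ℕ) (hm : 1 ≤ m) (c : ℝ) (hc0 : 0 ≤ c) (hc1 : c < 1) :
    ∃ k : ℕ → ℕ,
      (∀ j, Odd (k j) ∧ 3 ≤ k j) ∧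
      Tendsto (fun N => ∏ j ∈ Finset.range N, (1 - ((k j : ℝ) ^ m)⁻¹)) atTop (nhds c) := by
  set g := sierpinskiFactor m c
  refine ⟨fun j => sierpinskiStep c (greedyProduct g j),
    fun j => ⟨odd_oddAbove _, three_le_oddAbove _⟩, ?_⟩
  have hdecay : ∀ ε > 0, ∃ r < 1, 0 ≤ r ∧ ∀ P, c + ε ≤ P → g P ≤ r := fun ε hε =>
    ⟨g (c + ε), sierpinskiFactor_lt_one, sierpinskiFactor_nonneg,
      fun _ hP => sierpinskiFactor_le_of_add_le hc0 hε hP⟩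
  refine (tendsto_greedyProduct hc0 hc1 (fun _ => lt_mul_sierpinskiFactor hm hc0)
    (fun _ _ => sierpinskiFactor_le_one) hdecay).congr fun N => ?_
  exact (prod_range_greedyProduct g N).symm
end
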